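/- arXiv:1610.08816 — 5 statements merged into one kernel-verified Lean document; each statement's English description precedes it below -/
import Mathlib

section
/- For the connected threshold graph Γ on n = 2m vertices with binary string (01)^m, the determinant of the normalized adjacency matrix equals (−1)^{n/2} · 2/n!. -/
open Matrix Polynomial BigOperators Finset

def thresholdGraph (n : ℕ) (b : Fin n → Bool) : SimpleGraph (Fin n) where
  Adj i j := i ≠ j ∧ b (max i j) = true
  symm := ⟨fun i j h => ⟨h.1.symm, by rw [max_comm]; exact h.2⟩⟩
  loopless := ⟨fun i h => h.1 rfl⟩

instance (n : ℕ) (b : Fin n → Bool) : DecidableRel (thresholdGraph n b).Adj :=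
  fun i j => inferInstanceAs (Decidable (i ≠ j ∧ b (max i j) = true))

noncomputable def NA {n : ℕ} (G : SimpleGraph (Fin n)) [DecidableRel G.Adj] :
    Matrix (Fin n) (Fin n) ℝ :=
  (Matrix.diagonal fun i => ((G.degree i : ℝ))⁻¹) * G.adjMatrix ℝ

def cum (s t : ℕ → ℕ) (i : ℕ) : ℕ := ∑ j ∈ Finset.range i, (s j + t j)

def isOne (k : ℕ) (s t : ℕ → ℕ) (p : ℕ) : Bool :=
  decide (∃ i < k, cum s t i + s i ≤ p ∧ p < cum s t i + s i + t i)

def TG (k : ℕ) (s t : ℕ → ℕ) : SimpleGraph (Fin (cum s t k)) :=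
  thresholdGraph _ (fun p => isOne k s t p.val)

instance (k : ℕ) (s t : ℕ → ℕ) : DecidableRel (TG k s t).Adj :=
  inferInstanceAs (DecidableRel (thresholdGraph _ _).Adj)

/-! The string `(01)^m` makes vertex `2k` (added isolated) adjacent exactly to the later odd
vertices and vertex `2k + 1` (added dominating) adjacent to everything before it and to the later
odd vertices, so the degrees are `m - k` and `m + k`, whose product is `(2m)!/2`. The adjacency
matrix has determinant `(-1)^m`: the last two vertices span a block `!![0, 1; 1, 0]`, and since
the earlier vertices see only the last one, which this block swaps with the isolated one, the Schur
complement is the adjacency matrix of the first `2m - 2` vertices. -/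

open scoped Nat

theorem Finset.prod_range_two_mul {M : Type*} [CommMonoid M] (f : ℕ → M) (m : ℕ) :
    ∏ i ∈ range (2 * m), f i = ∏ k ∈ range m, f (2 * k) * f (2 * k + 1) := by
  induction m with
  | zero => simp
  | succ m ih =>
    rw [mul_add_one, prod_range_succ, prod_range_succ, ih, prod_range_succ, mul_assoc]

theorem two_mul_prod_sub_mul_add {m : ℕ} (hm : 0 < m) :
    2 * ∏ k ∈ range m, (m - k) * (m + k) = (2 * m)! := by
  obtain ⟨j, rfl⟩ : ∃ j, m = j + 1 := ⟨m - 1, by omega⟩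
  rw [prod_mul_distrib, ← Nat.descFactorial_eq_prod_range, ← Nat.ascFactorial_eq_prod_range,
    Nat.descFactorial_self, Nat.factorial_succ, mul_add_one,
    show 2 * j + 2 = j + (j + 1) + 1 by ring, Nat.factorial_succ,
    ← Nat.factorial_mul_ascFactorial]
  ring

-- The `q < p` are counted exactly when `p` is odd, the `q > p` exactly when `q` is odd.
theorem card_filter_ne_max_odd {p n : ℕ} (hpn : p < n) :
    #{q ∈ range n | p ≠ q ∧ max p q % 2 = 1} =
      (if p % 2 = 1 then p else 0) + n / 2 - (p + 1) / 2 := by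
  induction n, hpn using Nat.le_induction with
  | base =>
    rw [show {q ∈ range (p + 1) | p ≠ q ∧ max p q % 2 = 1} = {q ∈ range p | p % 2 = 1} by
        ext q; simp only [mem_filter, mem_range, max_def]; split_ifs <;> omega]
    split_ifs with hp <;> simp [hp]
  | succ n hpn ih =>
    rw [range_add_one, filter_insert, max_eq_right (by omega)]
    by_cases hn : n % 2 = 1
    · rw [if_pos ⟨by omega, hn⟩, card_insert_of_notMem (by simp), ih]
      split_ifs <;> omega
    · rw [if_neg (by omega), ih]
      split_ifs <;> omega

abbrev altThresholdGraph (n : ℕ) : SimpleGraph (Fin n) :=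
  thresholdGraph n fun p => decide (p.val % 2 = 1)

theorem altThresholdGraph_adj {n : ℕ} {i j : Fin n} :
    (altThresholdGraph n).Adj i j ↔ (i : ℕ) ≠ j ∧ max (i : ℕ) j % 2 = 1 := by
  simp [thresholdGraph, Fin.val_ne_iff]

theorem degree_altThresholdGraph (m : ℕ) (p : Fin (2 * m)) :
    (altThresholdGraph (2 * m)).degree p =
      if (p : ℕ) % 2 = 1 then m + p / 2 else m - p / 2 := by
  rw [← SimpleGraph.card_neighborFinset_eq_degree, SimpleGraph.neighborFinset_eq_filter,
    card_filter]
  simp_rw [altThresholdGraph_adj]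
  rw [Fin.sum_univ_eq_sum_range (fun q => if (p : ℕ) ≠ q ∧ max (p : ℕ) q % 2 = 1 then 1 else 0),
    ← card_filter, card_filter_ne_max_odd p.isLt]
  split_ifs <;> omega

theorem two_mul_prod_degree_altThresholdGraph {m : ℕ} (hm : 0 < m) :
    2 * ∏ p, (altThresholdGraph (2 * m)).degree p = (2 * m)! := by
  simp_rw [degree_altThresholdGraph]
  rw [Fin.prod_univ_eq_prod_range (fun p => if p % 2 = 1 then m + p / 2 else m - p / 2),
    prod_range_two_mul, ← two_mul_prod_sub_mul_add hm]
  congr 1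
  refine prod_congr rfl fun k _ => ?_
  rw [if_neg (by omega), if_pos (by omega)]
  congr 2 <;> omega

theorem adjMatrix_altThresholdGraph_submatrix_finSumFinEquiv (R : Type*) [CommRing R] (m : ℕ) :
    ((altThresholdGraph (2 * (m + 1))).adjMatrix R).submatrix finSumFinEquiv finSumFinEquiv =
      fromBlocks ((altThresholdGraph (2 * m)).adjMatrix R) (of fun _ => ![0, 1]) (of ![0, 1])
        !![0, 1; 1, 0] := by
  ext (i | i) (j | j)
  · simp [altThresholdGraph_adj]
  · have hi : (i : ℕ) < 2 * m := i.isLt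
    have hmax (k : ℕ) : max (i : ℕ) (2 * m + k) = 2 * m + k := by omega
    have hne (k : ℕ) : (i : ℕ) ≠ 2 * m + k := by omega
    fin_cases j <;> simp [altThresholdGraph_adj, hmax, hne]
  · have hj : (j : ℕ) < 2 * m := j.isLt
    have hmax (k : ℕ) : max (2 * m + k) (j : ℕ) = 2 * m + k := by omega
    have hne (k : ℕ) : 2 * m + k ≠ (j : ℕ) := by omega
    fin_cases i <;> simp [altThresholdGraph_adj, hmax, hne]
  · fin_cases i <;> fin_cases j <;> simp [altThresholdGraph_adj]

theorem det_adjMatrix_altThresholdGraph (R : Type*) [CommRing R] (m : ℕ) :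
    ((altThresholdGraph (2 * m)).adjMatrix R).det = (-1) ^ m := by
  induction m with
  | zero => simp
  | succ m ih =>
    set D : Matrix (Fin 2) (Fin 2) R := !![0, 1; 1, 0]
    have hD : D * D = 1 := by simp [D, one_fin_two]
    let : Invertible D := invertibleOfRightInverse D D hD
    have hSchur : (of fun _ => ![0, 1] : Matrix (Fin (2 * m)) (Fin 2) R) * ⅟D *
        (of ![0, 1] : Matrix (Fin 2) (Fin (2 * m)) R) = 0 := by
      ext i j
      simp [invOf_eq_right_inv hD, D, mul_apply, Fin.sum_univ_two]
    rw [← det_submatrix_equiv_self finSumFinEquiv,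
      adjMatrix_altThresholdGraph_submatrix_finSumFinEquiv, det_fromBlocks₂₂, hSchur, sub_zero, ih,
      det_fin_two_of]
    ring

/-- For the connected threshold graph on `n = 2m` vertices with
binary string `(01)^m` (alternately adding an isolated and a dominating vertex),
the determinant of the normalized adjacency matrix equals `(-1)^{n/2} · 2/n!`. -/
theorem threshold_alternating_det (m : ℕ) (hm : 1 ≤ m) :
    let G := thresholdGraph (2 * m) (fun p => decide (p.val % 2 = 1))
    (NA G).det = (-1 : ℝ) ^ m * 2 / (Nat.factorial (2 * m)) := by
  intro G
  have hprod : ((∏ p, G.degree p : ℕ) : ℝ) = (2 * m)! / 2 := by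
    rw [eq_div_iff two_ne_zero, mul_comm]
    exact_mod_cast two_mul_prod_degree_altThresholdGraph hm
  rw [NA, det_mul, det_diagonal, det_adjMatrix_altThresholdGraph, prod_inv_distrib,
    ← Nat.cast_prod, hprod]
  field_simp
end

section
/- Let Γ be a connected threshold graph with string 0^{s₁}1^{t₁}⋯0^{s_k}1^{t_k}, t = Σtᵢ, Sᵢ = s₁+⋯+sᵢ. For each i with tᵢ ≥ 2, the number −1/(t + Sᵢ − 1) is an eigenvalue of the normalized adjacency matrix 𝒜 with multiplicity at least tᵢ − 1. -/
open Matrix Polynomial BigOperators Finset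

/-!
The `tᵢ` vertices added at stage `i` are pairwise adjacent and have the same neighbours outside
their cell (closed twins), and they all have degree `t + Sᵢ - 1`. For closed twins `u, v` the
vector `e_u - e_v` satisfies `A (e_u - e_v) = -(e_u - e_v)`, hence is an eigenvector of `D⁻¹A`
for `-1/d` when both have degree `d`. Fixing one vertex `p` of the cell, the `tᵢ - 1` vectors
`e_q - e_p` are linearly independent, and geometric multiplicity bounds algebraic multiplicity.
The degree is counted in the vertex order: a dominating vertex `p` is adjacent to all earlier
vertices and to the dominating vertices after it.
-/

open Module

theorem Matrix.card_le_count_charpoly_roots {K ι n : Type*} [Field K] [DecidableEq K] [Fintype ι]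
    [Fintype n] [DecidableEq n] (M : Matrix n n K) (μ : K) {v : ι → n → K}
    (hv : LinearIndependent K v) (hMv : ∀ j, M *ᵥ v j = μ • v j) :
    Fintype.card ι ≤ M.charpoly.roots.count μ := by
  have hspan : Submodule.span K (Set.range v) ≤ Module.End.eigenspace M.toLin' μ :=
    Submodule.span_le.mpr <| Set.range_subset_iff.mpr fun j =>
      Module.End.mem_eigenspace_iff.mpr (by rw [Matrix.toLin'_apply, hMv j])
  calc Fintype.card ι = finrank K (Submodule.span K (Set.range v)) := (finrank_span_eq_card hv).symm
    _ ≤ finrank K (Module.End.eigenspace M.toLin' μ) := Submodule.finrank_mono hspan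
    _ ≤ M.toLin'.charpoly.rootMultiplicity μ := LinearMap.finrank_eigenspace_le _ μ
    _ = M.charpoly.roots.count μ := by rw [Matrix.charpoly_toLin', count_roots]

theorem linearIndependent_single_one_sub_single_one {R ι κ : Type*} [Ring R] [Fintype ι]
    [DecidableEq κ] (p : κ) {q : ι → κ} (hq : Function.Injective q) (hqp : ∀ a, q a ≠ p) :
    LinearIndependent R (fun a => (Pi.single (q a) 1 - Pi.single p 1 : κ → R)) := by
  classical
  rw [Fintype.linearIndependent_iff]
  intro g hg a
  simpa [Finset.sum_apply, Pi.single_apply, hqp a, hq.eq_iff, eq_comm] using congrFun hg (q a)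

theorem Nat.count_le_or_add_count {P : ℕ → Prop} [DecidablePred P] {a N : ℕ} (h : a < N) :
    Nat.count (fun m => m ≤ a ∨ P m) N + Nat.count P (a + 1) = a + 1 + Nat.count P N := by
  obtain ⟨c, rfl⟩ : ∃ c, N = a + 1 + c := ⟨N - (a + 1), by omega⟩
  have hlow : Nat.count (fun m => m ≤ a ∨ P m) (a + 1) = a + 1 :=
    Nat.count_of_forall fun m hm => Or.inl (by omega)
  have htail : Nat.count (fun m => a + 1 + m ≤ a ∨ P (a + 1 + m)) c =
      Nat.count (fun m => P (a + 1 + m)) c := by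
    simp only [show ∀ m, ¬a + 1 + m ≤ a by omega, false_or]
  rw [Nat.count_add _ (a + 1) c, Nat.count_add _ (a + 1) c, hlow, htail]
  ring

theorem Fin.card_filter_val_eq_count {n : ℕ} (P : ℕ → Prop) [DecidablePred P] :
    #{q : Fin n | P q} = Nat.count P n := by
  rw [Nat.count_eq_card_filter_range, card_filter, card_filter]
  exact Fin.sum_univ_eq_sum_range (fun m => if P m then 1 else 0) n

theorem SimpleGraph.adjMatrix_mulVec_single_sub_single {V R : Type*} [Fintype V] [DecidableEq V]
    [Ring R] (G : SimpleGraph V) [DecidableRel G.Adj] {u v : V} (huv : G.Adj u v)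
    (htwin : ∀ w, w ≠ u → w ≠ v → (G.Adj w u ↔ G.Adj w v)) :
    G.adjMatrix R *ᵥ (Pi.single u 1 - Pi.single v 1) = -(Pi.single u 1 - Pi.single v 1) := by
  ext w
  rw [Matrix.mulVec_sub, Matrix.mulVec_single_one, Matrix.mulVec_single_one]
  by_cases hwu : w = u
  · subst hwu; simp [huv, huv.ne]
  by_cases hwv : w = v
  · subst hwv; simp [huv.symm, huv.ne']
  simp [hwu, hwv, htwin w hwu hwv]

theorem NA_mulVec_single_sub_single {n : ℕ} (G : SimpleGraph (Fin n)) [DecidableRel G.Adj]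
    {u v : Fin n} (huv : G.Adj u v) (htwin : ∀ w, w ≠ u → w ≠ v → (G.Adj w u ↔ G.Adj w v))
    (hdeg : G.degree u = G.degree v) :
    NA G *ᵥ (Pi.single u 1 - Pi.single v 1) =
      (-1 / (G.degree u : ℝ)) • (Pi.single u 1 - Pi.single v 1) := by
  rw [NA, ← Matrix.mulVec_mulVec, G.adjMatrix_mulVec_single_sub_single huv htwin,
    Matrix.mulVec_neg]
  ext w
  by_cases hwu : w = u
  · subst hwu; simp [Matrix.mulVec_diagonal, huv.ne]; ring
  by_cases hwv : w = v
  · subst hwv; simp [Matrix.mulVec_diagonal, huv.ne', hdeg]; ring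
  simp [Matrix.mulVec_diagonal, hwu, hwv]

theorem le_count_charpoly_NA_of_twins {n r d : ℕ} (G : SimpleGraph (Fin n)) [DecidableRel G.Adj]
    (p : Fin n) {q : Fin r → Fin n} (hq : Function.Injective q) (hadj : ∀ a, G.Adj (q a) p)
    (htwin : ∀ a w, w ≠ q a → w ≠ p → (G.Adj w (q a) ↔ G.Adj w p))
    (hdeg : ∀ a, G.degree (q a) = d) (hdp : G.degree p = d) :
    r ≤ (NA G).charpoly.roots.count (-1 / (d : ℝ)) := by
  simpa using (NA G).card_le_count_charpoly_roots _
    (linearIndependent_single_one_sub_single_one p hq fun a => (hadj a).ne) fun a => by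
      rw [NA_mulVec_single_sub_single G (hadj a) (htwin a) (by rw [hdeg, hdp]), hdeg]

section ThresholdGraph

variable {n : ℕ} (b : Fin n → Bool)

theorem thresholdGraph_adj_of_lt {x y : Fin n} (hxy : x < y) (hy : b y = true) :
    (thresholdGraph n b).Adj y x :=
  ⟨hxy.ne', by rwa [max_eq_left hxy.le]⟩

theorem thresholdGraph_adj_iff_adj_of_forall_Icc {x y : Fin n} (hxy : x < y)
    (hb : ∀ z, x ≤ z → z ≤ y → b z = true) (w : Fin n) (hwy : w ≠ y) (hwx : w ≠ x) :
    (thresholdGraph n b).Adj w y ↔ (thresholdGraph n b).Adj w x := by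
  show w ≠ y ∧ b (max w y) = true ↔ w ≠ x ∧ b (max w x) = true
  rcases le_or_gt w y with hwy' | hyw
  · rw [max_eq_right hwy', hb y hxy.le le_rfl, hb _ (le_max_right w x) (max_le hwy' hxy.le)]
    exact ⟨fun _ => ⟨hwx, rfl⟩, fun _ => ⟨hwy, rfl⟩⟩
  · rw [max_eq_left hyw.le, max_eq_left (hxy.trans hyw).le]
    exact ⟨fun h => ⟨hwx, h.2⟩, fun h => ⟨hwy, h.2⟩⟩

theorem thresholdGraph_degree_add_one {p : Fin n} (hp : b p = true) :
    (thresholdGraph n b).degree p + 1 = #{q | q ≤ p ∨ b q = true} := by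
  rw [← SimpleGraph.card_neighborFinset_eq_degree,
    ← card_insert_of_notMem (SimpleGraph.notMem_neighborFinset_self _ p)]
  congr 1
  ext q
  simp only [mem_insert, SimpleGraph.mem_neighborFinset, mem_filter, mem_univ, true_and]
  show q = p ∨ (p ≠ q ∧ b (max p q) = true) ↔ q ≤ p ∨ b q = true
  rcases lt_trichotomy q p with hqp | rfl | hpq
  · simp [hqp.le, hqp.ne', hp]
  · simp
  · simp [hpq.not_ge, hpq.ne, hpq.ne', max_eq_right hpq.le]

end ThresholdGraph

section Stages

variable {k : ℕ} {s t : ℕ → ℕ}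

theorem cum_succ (j : ℕ) : cum s t (j + 1) = cum s t j + s j + t j := by
  rw [cum, sum_range_succ, ← cum, add_assoc]

theorem cum_mono : Monotone (cum s t) :=
  monotone_nat_of_le_succ fun j => by rw [cum_succ, add_assoc]; exact Nat.le_add_right _ _

theorem isOne_of_mem_cell {i m : ℕ} (hi : i < k) (h₁ : cum s t i + s i ≤ m)
    (h₂ : m < cum s t i + s i + t i) : isOne k s t m = true :=
  decide_eq_true ⟨i, hi, h₁, h₂⟩

theorem isOne_eq_false_of_mem_zeroBlock {i m : ℕ} (hi : i < k) (h₁ : cum s t i ≤ m)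
    (h₂ : m < cum s t i + s i) : isOne k s t m = false := by
  refine decide_eq_false fun ⟨j, _, hj₁, hj₂⟩ => ?_
  rcases lt_trichotomy j i with hji | rfl | hij
  · have := cum_mono (s := s) (t := t) (Nat.succ_le_of_lt hji)
    rw [cum_succ] at this
    omega
  · omega
  · have := cum_mono (s := s) (t := t) (Nat.succ_le_of_lt hij)
    rw [cum_succ] at this
    omega

theorem count_isOne_cell {i r : ℕ} (hi : i < k) (hr : r ≤ t i) :
    Nat.count (isOne k s t · = true) (cum s t i + s i + r) =
      Nat.count (isOne k s t · = true) (cum s t i) + r := by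
  have hzeros : Nat.count (fun m => isOne k s t (cum s t i + m) = true) (s i) = 0 :=
    Nat.count_of_forall_not fun m hm => by
      rw [isOne_eq_false_of_mem_zeroBlock hi (by omega) (by omega)]; decide
  have hones : Nat.count (fun m => isOne k s t (cum s t i + s i + m) = true) r = r :=
    Nat.count_of_forall fun m hm => isOne_of_mem_cell hi (by omega) (by omega)
  rw [Nat.count_add, Nat.count_add, hzeros, hones, add_zero]

theorem count_isOne_cum {j : ℕ} (hj : j ≤ k) :
    Nat.count (isOne k s t · = true) (cum s t j) = ∑ l ∈ range j, t l := by
  induction j with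
  | zero => simp [cum]
  | succ j ih => rw [cum_succ, count_isOne_cell hj le_rfl, ih (by omega), sum_range_succ]

theorem TG_degree_add_one {i : ℕ} (hi : i < k) (p : Fin (cum s t k))
    (h₁ : cum s t i + s i ≤ p) (h₂ : p < cum s t i + s i + t i) :
    (TG k s t).degree p + 1 = ∑ j ∈ range k, t j + ∑ j ∈ range (i + 1), s j := by
  have hdeg : (TG k s t).degree p + 1 =
      Nat.count (fun m => m ≤ p ∨ isOne k s t m = true) (cum s t k) := calc
    _ = #{q | q ≤ p ∨ isOne k s t q = true} :=
      thresholdGraph_degree_add_one _ (isOne_of_mem_cell hi h₁ h₂)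
    _ = _ := by
      simp only [Fin.le_def]
      exact Fin.card_filter_val_eq_count (fun m => m ≤ p ∨ isOne k s t m = true)
  have hcount := Nat.count_le_or_add_count (P := (isOne k s t · = true)) p.is_lt
  obtain ⟨r, hr⟩ : ∃ r, (p : ℕ) + 1 = cum s t i + s i + r := ⟨p + 1 - (cum s t i + s i), by omega⟩
  rw [hr, count_isOne_cell hi (by omega), count_isOne_cum hi.le, count_isOne_cum le_rfl] at hcount
  have hcum : cum s t i = ∑ j ∈ range i, s j + ∑ j ∈ range i, t j := sum_add_distrib
  rw [sum_range_succ]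
  omega

end Stages

theorem threshold_eigenvalue_multiplicity_general (k : ℕ) (s t : ℕ → ℕ)
    (i : ℕ) (hik : i < k) (hti : 2 ≤ t i) :
    let tt := ∑ j ∈ Finset.range k, t j
    let Si := ∑ j ∈ Finset.range (i + 1), s j
    t i - 1 ≤ (NA (TG k s t)).charpoly.roots.count (-1 / ((tt + Si - 1 : ℕ) : ℝ)) := by
  intro tt Si
  set c := cum s t i + s i
  have hcell : c + t i ≤ cum s t k := (cum_succ i).symm.le.trans (cum_mono hik)
  have hdeg (v : Fin (cum s t k)) (h₁ : c ≤ v) (h₂ : v < c + t i) :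
      (TG k s t).degree v = tt + Si - 1 := by
    have := TG_degree_add_one hik v h₁ h₂
    omega
  let p : Fin (cum s t k) := ⟨c, by omega⟩
  let q (a : Fin (t i - 1)) : Fin (cum s t k) := ⟨c + 1 + a, by omega⟩
  have hpq (a : Fin (t i - 1)) : p < q a := Fin.lt_def.mpr (show c < c + 1 + a by omega)
  have hq (a : Fin (t i - 1)) : (q a : ℕ) < c + t i := show c + 1 + a < c + t i by omega
  refine le_count_charpoly_NA_of_twins (TG k s t) p (q := q)
    (fun a b h => Fin.ext (by simpa [q] using congrArg Fin.val h))
    (fun a => thresholdGraph_adj_of_lt _ (hpq a) (isOne_of_mem_cell hik (hpq a).le (hq a)))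
    (fun a => thresholdGraph_adj_iff_adj_of_forall_Icc _ (hpq a) fun z h₁ h₂ =>
      isOne_of_mem_cell hik h₁ (lt_of_le_of_lt h₂ (hq a)))
    (fun a => hdeg _ (hpq a).le (hq a)) (hdeg p le_rfl (show c < c + t i by omega))

/-- For a connected threshold graph `0^{s₁}1^{t₁}⋯0^{s_k}1^{t_k}`
and each stage `i` with `tᵢ ≥ 2`, the number `-1/(t + Sᵢ - 1)` is an eigenvalue
of the normalized adjacency matrix with (algebraic) multiplicity at least `tᵢ - 1`. -/
theorem threshold_eigenvalue_multiplicity (k : ℕ) (s t : ℕ → ℕ) (hk : 1 ≤ k)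
    (hs : ∀ i < k, 1 ≤ s i) (ht : ∀ i < k, 1 ≤ t i)
    (i : ℕ) (hik : i < k) (hti : 2 ≤ t i) :
    let tt := ∑ j ∈ Finset.range k, t j
    let Si := ∑ j ∈ Finset.range (i + 1), s j
    t i - 1 ≤ (NA (TG k s t)).charpoly.roots.count (-1 / ((tt + Si - 1 : ℕ) : ℝ)) :=
  threshold_eigenvalue_multiplicity_general k s t i hik hti
end

section
/- For a connected threshold graph with string 0^{s₁}1^{t₁}⋯0^{s_k}1^{t_k} and natural equitable partition π into 2k cells, det(B_π) = (−1)^k s₁t₁s₂t₂⋯s_k t_k, and consequently det(ℬ_π) = (−1)^k r₁r₂⋯r_{2k} where rᵢ = |Cᵢ|/d(Cᵢ). -/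
/-!
In `B_π` for `k + 1` stages, the row of cell `2k` (the isolated vertices of the last stage) is
`t_k` times the indicator of cell `2k + 1`, and the rows of all earlier cells agree with it in
the last two columns. Subtracting it from them makes `B_π` block lower triangular, with
diagonal blocks `B_π` for the first `k` stages and `[[0, t_k], [s_k, t_k - 1]]`, so each stage
contributes the factor `-s_k t_k`. Then `det ℬ_π = det B_π / ∏ d(Cᵢ)`.
-/

open Matrix Polynomial BigOperators Finset

/-- The quotient matrix `B_π` of the natural equitable partition of the threshold
graph `0^{s₁}1^{t₁}⋯0^{s_k}1^{t_k}` into `2k` cells. Cells are 0-indexed: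
cell `2i` is the `sᵢ` isolated-type vertices of stage `i`, cell `2i+1` the `tᵢ`
dominating-type vertices of stage `i`. -/
def Bq (k : ℕ) (s t : ℕ → ℕ) : Matrix (Fin (2 * k)) (Fin (2 * k)) ℝ :=
  fun i j =>
    if i.val % 2 = 0 then
      (if j.val % 2 = 1 ∧ i.val / 2 ≤ j.val / 2 then (t (j.val / 2) : ℝ) else 0)
    else
      if j < i then (if j.val % 2 = 0 then (s (j.val / 2) : ℝ) else (t (j.val / 2) : ℝ))
      else if j = i then (t (i.val / 2) : ℝ) - 1
      else if j.val % 2 = 1 then (t (j.val / 2) : ℝ) else 0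

/-- The common degree `d(Cᵢ)` of the vertices in cell `i`, i.e. the `i`-th row sum
of `B_π`. -/
noncomputable def dq (k : ℕ) (s t : ℕ → ℕ) (i : Fin (2 * k)) : ℝ := ∑ j, Bq k s t i j

/-- The normalized quotient matrix `ℬ_π = D_π⁻¹ B_π`. -/
noncomputable def Bcal (k : ℕ) (s t : ℕ → ℕ) : Matrix (Fin (2 * k)) (Fin (2 * k)) ℝ :=
  Matrix.diagonal (fun i => (dq k s t i)⁻¹) * Bq k s t


namespace Matrix

variable {m n R : Type*} [Fintype m] [Fintype n] [DecidableEq m] [DecidableEq n] [CommRing R]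

/-- Subtracting row `i` of the lower blocks from every upper row clears `B` and keeps `A`. -/
theorem det_fromBlocks_eq_mul_of_row_eq (A : Matrix m m R) (B : Matrix m n R)
    (C : Matrix n m R) (D : Matrix n n R) (i : n) (hB : ∀ r, B r = D i) (hC : C i = 0) :
    (fromBlocks A B C D).det = A.det * D.det := by
  let U : Matrix m n R := of fun _ j => if j = i then 1 else 0
  have hUC : U * C = 0 := by
    ext r c
    simp [U, mul_apply, hC]
  have hUD : U * D = B := by
    ext r c
    simp [U, mul_apply, hB]
  have hclear : fromBlocks 1 (-U) 0 1 * fromBlocks A B C D = fromBlocks A 0 C D := by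
    simp [fromBlocks_multiply, hUC, hUD]
  rw [← det_fromBlocks_zero₁₂, ← hclear, det_mul, det_fromBlocks_zero₂₁]
  simp

end Matrix

def splitLastCells (k : ℕ) : Fin (2 * k) ⊕ Fin 2 ≃ Fin (2 * (k + 1)) :=
  finSumFinEquiv.trans (finCongr (by ring))

@[simp] lemma splitLastCells_inl (k : ℕ) (i : Fin (2 * k)) :
    (splitLastCells k (.inl i) : ℕ) = i := rfl

@[simp] lemma splitLastCells_inr (k : ℕ) (j : Fin 2) :
    (splitLastCells k (.inr j) : ℕ) = 2 * k + j := rfl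

section BqSucc

variable (k : ℕ) (s t : ℕ → ℕ)

lemma Bq_succ_toBlocks₁₁ :
    ((Bq (k + 1) s t).submatrix (splitLastCells k) (splitLastCells k)).toBlocks₁₁ = Bq k s t := by
  ext i j
  simp only [toBlocks₁₁, of_apply, submatrix_apply, Bq, Fin.lt_def, Fin.ext_iff,
    splitLastCells_inl]
  rfl

lemma Bq_succ_toBlocks₁₂_apply (r : Fin (2 * k)) :
    ((Bq (k + 1) s t).submatrix (splitLastCells k) (splitLastCells k)).toBlocks₁₂ r =
      ((Bq (k + 1) s t).submatrix (splitLastCells k) (splitLastCells k)).toBlocks₂₂ 0 := by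
  ext j
  have hr := r.isLt
  fin_cases j
  · simp [toBlocks₁₂, toBlocks₂₂, Bq, Fin.lt_def, -Fin.val_fin_lt, Fin.ext_iff, Nat.mul_add_div]
  · simp [toBlocks₁₂, toBlocks₂₂, Bq, Fin.lt_def, -Fin.val_fin_lt, Fin.ext_iff, Nat.mul_add_div]
    omega

lemma Bq_succ_toBlocks₂₁_zero :
    ((Bq (k + 1) s t).submatrix (splitLastCells k) (splitLastCells k)).toBlocks₂₁ 0 = 0 := by
  ext j
  have hj := j.isLt
  simp [toBlocks₂₁, Bq, Fin.lt_def, -Fin.val_fin_lt, Nat.mul_add_div]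
  omega

lemma det_Bq_succ_toBlocks₂₂ :
    ((Bq (k + 1) s t).submatrix (splitLastCells k) (splitLastCells k)).toBlocks₂₂.det =
      -((s k : ℝ) * t k) := by
  simp [det_fin_two, toBlocks₂₂, Bq, Fin.lt_def, -Fin.val_fin_lt, Fin.ext_iff, Nat.mul_add_div]
  ring

lemma det_Bq_succ : (Bq (k + 1) s t).det = -((s k : ℝ) * t k) * (Bq k s t).det := by
  rw [← det_submatrix_equiv_self (splitLastCells k),
    ← fromBlocks_toBlocks ((Bq (k + 1) s t).submatrix (splitLastCells k) (splitLastCells k)),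
    det_fromBlocks_eq_mul_of_row_eq _ _ _ _ 0 (Bq_succ_toBlocks₁₂_apply k s t)
      (Bq_succ_toBlocks₂₁_zero k s t),
    Bq_succ_toBlocks₁₁, det_Bq_succ_toBlocks₂₂, mul_comm]

end BqSucc

lemma det_Bq (k : ℕ) (s t : ℕ → ℕ) :
    (Bq k s t).det = (-1 : ℝ) ^ k * ∏ i ∈ Finset.range k, ((s i : ℝ) * (t i : ℝ)) := by
  induction k with
  | zero => simp
  | succ k ih =>
    rw [det_Bq_succ, ih, Finset.prod_range_succ, pow_succ]
    ring

lemma prod_cellSizes (k : ℕ) (s t : ℕ → ℕ) :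
    ∏ j : Fin (2 * k), (if j.val % 2 = 0 then (s (j.val / 2) : ℝ) else (t (j.val / 2) : ℝ)) =
      ∏ i ∈ Finset.range k, ((s i : ℝ) * (t i : ℝ)) := by
  rw [Fin.prod_univ_eq_prod_range (fun j => if j % 2 = 0 then (s (j / 2) : ℝ) else t (j / 2))]
  induction k with
  | zero => simp
  | succ k ih =>
    rw [show 2 * (k + 1) = 2 * k + 1 + 1 by ring, Finset.prod_range_succ, Finset.prod_range_succ,
      ih, Finset.prod_range_succ, mul_assoc]
    simp [Nat.mul_add_div]

theorem threshold_quotient_det_general (k : ℕ) (s t : ℕ → ℕ) :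
    (Bq k s t).det = (-1 : ℝ) ^ k * ∏ i ∈ Finset.range k, ((s i : ℝ) * (t i : ℝ)) ∧
    (Bcal k s t).det = (-1 : ℝ) ^ k *
      ∏ j : Fin (2 * k),
        ((if j.val % 2 = 0 then (s (j.val / 2) : ℝ) else (t (j.val / 2) : ℝ)) /
          dq k s t j) := by
  refine ⟨det_Bq k s t, ?_⟩
  simp only [Bcal, det_mul, det_diagonal, det_Bq, div_eq_mul_inv, Finset.prod_mul_distrib,
    prod_cellSizes]
  ring

/-- For a connected threshold graph `0^{s₁}1^{t₁}⋯0^{s_k}1^{t_k}`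
with natural equitable partition into `2k` cells, `det(B_π) = (-1)^k s₁t₁⋯s_k t_k`
and consequently `det(ℬ_π) = (-1)^k r₁⋯r_{2k}` where `rᵢ = |Cᵢ|/d(Cᵢ)`. -/
theorem threshold_quotient_det (k : ℕ) (s t : ℕ → ℕ) (hk : 1 ≤ k)
    (hs : ∀ i < k, 1 ≤ s i) (ht : ∀ i < k, 1 ≤ t i) :
    (Bq k s t).det = (-1 : ℝ) ^ k * ∏ i ∈ Finset.range k, ((s i : ℝ) * (t i : ℝ)) ∧
    (Bcal k s t).det = (-1 : ℝ) ^ k *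
      ∏ j : Fin (2 * k),
        ((if j.val % 2 = 0 then (s (j.val / 2) : ℝ) else (t (j.val / 2) : ℝ)) /
          dq k s t j) :=
  threshold_quotient_det_general k s t
end

section
/- For a connected threshold graph Γ with string 0^{s₁}1^{t₁}⋯0^{s_k}1^{t_k}, the spectrum of the normalized adjacency matrix 𝒜 equals the union (as multisets, taking simple eigenvalues from ℬ_π) of the spectrum of the normalized quotient matrix ℬ_π and the set T, where T consists of the eigenvalue 0 with multiplicity s − k together with eigenvalues −1/(t + Sᵢ − 1) with multiplicity tᵢ − 1 for each i with tᵢ > 1. -/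
open Matrix Polynomial BigOperators Finset

/-!
Cut the vertices of the threshold graph into the `2k` cells of its string. Two distinct vertices
are adjacent iff the later of their two cells is a block of `1`s, so adjacency depends only on
the cells. For any graph with this property, choose a representative `r c` in every cell `c`.
The cell indicators, together with the differences `e_v - e_{r c}` for the other vertices `v` of
each cell, form a basis. `𝒜` preserves the span of the indicators and acts on it by `ℬ_π`. Each
difference is an eigenvector, with eigenvalue `0` in a cell of `0`s and `-1/d` in a cell of `1`s,
where `d` is the common degree of that cell. So `χ(𝒜) = χ(ℬ_π) · ∏ (X - λ)`. A vertex of the `i`-th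
block of `1`s has degree `t + Sᵢ - 1`.
-/

section CellBasis

variable {K V m : Type*} [Field K]

abbrev NonRep (f : V → m) (r : m → V) : Type _ := {v : V // v ≠ r (f v)}

variable (K) in
def cellIndicator [DecidableEq m] (f : V → m) : Matrix V m K :=
  of fun v c => if f v = c then 1 else 0

variable (K) in
def cellAverage [Fintype V] [DecidableEq m] (f : V → m) : Matrix m V K :=
  of fun c v => if f v = c then (#{w | f w = c} : K)⁻¹ else 0

variable (K) in
def twinDiff [DecidableEq V] (f : V → m) (r : m → V) : Matrix V (NonRep f r) K :=
  of fun v q => (if v = q.1 then 1 else 0) - if v = r (f q.1) then 1 else 0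

variable (K) in
/-- Together with `cellAverage`, the rows of the inverse of `fromCols cellIndicator twinDiff`. -/
def twinCoord [Fintype V] [DecidableEq V] [DecidableEq m] (f : V → m) (r : m → V) :
    Matrix (NonRep f r) V K :=
  of fun q v => (if v = q.1 then 1 else 0) - cellAverage K f (f q.1) v

variable {f : V → m} {r : m → V}

lemma cellAverage_mul_cellIndicator [CharZero K] [Fintype V] [DecidableEq m]
    (hr : Function.LeftInverse f r) : cellAverage K f * cellIndicator K f = 1 := by
  ext c c'
  have hc : (#{w | f w = c} : K) ≠ 0 := by
    exact_mod_cast (card_pos.mpr ⟨r c, by simp [hr c]⟩).ne'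
  rw [mul_apply]
  by_cases h : c = c'
  · subst h
    simp [cellAverage, cellIndicator, ← sum_filter, filter_filter, hc]
  · simp only [cellAverage, cellIndicator, of_apply, mul_ite, mul_one, mul_zero, one_apply, h,
      if_false]
    exact sum_eq_zero fun v _ => by grind

lemma cellAverage_mul_twinDiff [Fintype V] [DecidableEq V] [DecidableEq m]
    (hr : Function.LeftInverse f r) : cellAverage K f * twinDiff K f r = 0 := by
  ext c q
  rw [mul_apply]
  simp [cellAverage, twinDiff, mul_sub, hr (f q.1)]

lemma twinCoord_mul_cellIndicator [CharZero K] [Fintype V] [DecidableEq V] [DecidableEq m]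
    (hr : Function.LeftInverse f r) : twinCoord K f r * cellIndicator K f = 0 := by
  ext q c
  have h := congrFun₂ (cellAverage_mul_cellIndicator (K := K) hr) (f q.1) c
  rw [mul_apply] at h ⊢
  simp only [twinCoord, of_apply, sub_mul, sum_sub_distrib, ite_mul, one_mul, zero_mul,
    sum_ite_eq', mem_univ, if_true, h]
  simp [cellIndicator, one_apply]

lemma twinCoord_mul_twinDiff [Fintype V] [DecidableEq V] [DecidableEq m]
    (hr : Function.LeftInverse f r) : twinCoord K f r * twinDiff K f r = 1 := by
  ext q q'
  have h := congrFun₂ (cellAverage_mul_twinDiff (K := K) hr) (f q.1) q'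
  rw [mul_apply] at h ⊢
  simp only [twinCoord, of_apply, sub_mul, sum_sub_distrib, ite_mul, one_mul, zero_mul,
    sum_ite_eq', mem_univ, if_true, h]
  have hq : q.1 ≠ r (f q'.1) := fun h => q.2 (by rw [h, hr])
  simp [twinDiff, one_apply, Subtype.ext_iff, hq]

lemma mul_cellIndicator [Fintype V] [Fintype m] [DecidableEq m] {A : Matrix V V K}
    {B : Matrix m m K} (hB : ∀ p c, ∑ q with f q = c, A p q = B (f p) c) :
    A * cellIndicator K f = cellIndicator K f * B := by
  ext p c
  simp [mul_apply, cellIndicator, ← hB, sum_filter]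

lemma mul_twinDiff [Fintype V] [DecidableEq V] {A : Matrix V V K} {μ : m → K}
    (hμ : ∀ p q, A p q - A p (r (f q)) =
      μ (f q) * ((if p = q then 1 else 0) - if p = r (f q) then 1 else 0)) :
    A * twinDiff K f r = twinDiff K f r * diagonal fun q : NonRep f r => μ (f q.1) := by
  ext p q
  rw [mul_diagonal, mul_apply]
  simp [twinDiff, mul_sub, hμ, sub_mul, ite_mul]

end CellBasis

lemma charpoly_mul_mul_of_mul_eq_one {R n p : Type*} [CommRing R] [Fintype n] [DecidableEq n]
    [Fintype p] [DecidableEq p] (e : n ≃ p) {P : Matrix n p R} {Q : Matrix p n R}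
    (h : P * Q = 1) (A : Matrix n n R) : (Q * A * P).charpoly = A.charpoly := by
  have key := charpoly_mul_comm' Q (A * P)
  rw [Matrix.mul_assoc A P Q, h, mul_one, Fintype.card_congr e] at key
  rw [Matrix.mul_assoc]
  exact (isRegular_X_pow _).left.eq_iff.mp key

section TwinCells

variable {K V m : Type*} [Field K] [Fintype V] [DecidableEq V] [DecidableEq m]
  {f : V → m} {r : m → V}

def twinEquiv (hr : Function.LeftInverse f r) : m ⊕ NonRep f r ≃ V where
  toFun := Sum.elim r Subtype.val
  invFun v := if h : v = r (f v) then .inl (f v) else .inr ⟨v, h⟩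
  left_inv := by
    rintro (c | ⟨v, hv⟩)
    · simp [hr c]
    · simp [hv]
  right_inv v := by
    by_cases h : v = r (f v)
    · simp only [dif_pos h, Sum.elim_inl]
      exact h.symm
    · simp [h]

theorem charpoly_eq_mul_of_twin_cells [Fintype m] [CharZero K] (hr : Function.LeftInverse f r)
    {A : Matrix V V K} {B : Matrix m m K} {μ : m → K}
    (hB : ∀ p c, ∑ q with f q = c, A p q = B (f p) c)
    (hμ : ∀ p q, A p q - A p (r (f q)) =
      μ (f q) * ((if p = q then 1 else 0) - if p = r (f q) then 1 else 0)) :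
    A.charpoly = B.charpoly * ∏ q : NonRep f r, (X - C (μ (f q))) := by
  set P := fromCols (cellIndicator K f) (twinDiff K f r)
  set Q := fromRows (cellAverage K f) (twinCoord K f r)
  have hQP : Q * P = 1 := by
    rw [fromRows_mul_fromCols, cellAverage_mul_cellIndicator hr, cellAverage_mul_twinDiff hr,
      twinCoord_mul_cellIndicator hr, twinCoord_mul_twinDiff hr, fromBlocks_one]
  have hPQ : P * Q = 1 := (mul_eq_one_comm_of_equiv (twinEquiv hr)).mp hQP
  have hAP : A * P = P * fromBlocks B 0 0 (diagonal fun q : NonRep f r => μ (f q.1)) := by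
    rw [mul_fromCols, fromCols_mul_fromBlocks, mul_cellIndicator hB, mul_twinDiff hμ]
    simp
  rw [← charpoly_mul_mul_of_mul_eq_one (twinEquiv hr).symm hPQ, Matrix.mul_assoc, hAP,
    ← Matrix.mul_assoc, hQP, one_mul, charpoly_fromBlocks_zero₁₂, charpoly_diagonal]

lemma card_nonRep_fiber (hr : Function.LeftInverse f r) (c : m) :
    #{q : NonRep f r | f q.1 = c} = #{v | f v = c} - 1 := by
  rw [← card_map (Function.Embedding.subtype _),
    ← card_erase_of_mem (s := {v | f v = c}) (a := r c) (by simp [hr c])]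
  congr 1
  ext v
  simp only [mem_map, mem_filter, mem_univ, true_and, Function.Embedding.coe_subtype, mem_erase]
  constructor
  · rintro ⟨q, rfl, rfl⟩
    exact ⟨q.2, rfl⟩
  · rintro ⟨hv, rfl⟩
    exact ⟨⟨v, hv⟩, rfl, rfl⟩

lemma roots_prod_nonRep [Fintype m] (hr : Function.LeftInverse f r) (g : m → K) :
    (∏ q : NonRep f r, (X - C (g (f q)))).roots =
      ∑ c, Multiset.replicate (#{v | f v = c} - 1) (g c) := by
  rw [← Finset.prod_fiberwise' univ (fun q : NonRep f r => f q.1) (fun c => X - C (g c))]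
  simp only [prod_const, card_nonRep_fiber hr]
  rw [roots_prod _ _ (prod_ne_zero_iff.2 fun c _ => pow_ne_zero _ (X_sub_C_ne_zero _))]
  change ∑ c, _ = _
  simp [roots_pow, Multiset.nsmul_singleton]

end TwinCells

lemma NA_apply {n : ℕ} (G : SimpleGraph (Fin n)) [DecidableRel G.Adj] (p q : Fin n) :
    NA G p q = (G.degree p : ℝ)⁻¹ * if G.Adj p q then 1 else 0 := by
  rw [NA, diagonal_mul, SimpleGraph.adjMatrix_apply]

section BlowUp

variable {n : ℕ} {m : Type*} [DecidableEq m] (f : Fin n → m) (R : m → m → Prop) [DecidableRel R]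

/-- Entry `(c, c')` counts the neighbours in cell `c'` of any vertex of cell `c`. -/
def quotientMatrix : Matrix m m ℝ :=
  of fun c c' => if R c c' then (#{v | f v = c'} : ℝ) - (if c = c' then 1 else 0) else 0

variable {f R} {G : SimpleGraph (Fin n)} [DecidableRel G.Adj]

lemma card_fiber_adj (hG : ∀ p q, G.Adj p q ↔ p ≠ q ∧ R (f p) (f q)) (p : Fin n) (c : m) :
    (#{q | f q = c ∧ G.Adj p q} : ℝ) = quotientMatrix f R (f p) c := by
  by_cases h : R (f p) c
  · have hset : ({q | f q = c ∧ G.Adj p q} : Finset _) = ({q | f q = c} : Finset _).erase p := by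
      ext q
      simp only [mem_filter, mem_univ, true_and, mem_erase, hG]
      grind
    rw [hset, quotientMatrix, of_apply, if_pos h, card_erase_eq_ite]
    by_cases hc : f p = c
    · have hp : p ∈ ({q | f q = c} : Finset _) := by simp [hc]
      rw [if_pos hp, Nat.cast_sub (card_pos.2 ⟨p, hp⟩)]
      simp [hc]
    · simp [hc]
  · simp only [quotientMatrix, of_apply, if_neg h, Nat.cast_eq_zero, card_eq_zero,
      filter_eq_empty_iff, mem_univ, true_implies, not_and]
    rintro q rfl hpq
    exact h ((hG p q).1 hpq).2

variable [Fintype m]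

variable (f R) in
def cellDegree (c : m) : ℝ := ∑ c', quotientMatrix f R c c'

variable (f R) in
noncomputable def twinEigenvalue (c : m) : ℝ := if R c c then -(cellDegree f R c)⁻¹ else 0

lemma degree_eq_cellDegree (hG : ∀ p q, G.Adj p q ↔ p ≠ q ∧ R (f p) (f q)) (p : Fin n) :
    (G.degree p : ℝ) = cellDegree f R (f p) := by
  rw [cellDegree, ← SimpleGraph.card_neighborFinset_eq_degree,
    card_eq_sum_card_fiberwise (f := f) (t := univ) (fun _ _ => mem_univ _)]
  push_cast
  refine sum_congr rfl fun c _ => ?_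
  rw [← card_fiber_adj hG, SimpleGraph.neighborFinset_eq_filter, filter_filter]
  simp_rw [and_comm]

lemma sum_NA_fiber (hG : ∀ p q, G.Adj p q ↔ p ≠ q ∧ R (f p) (f q)) (p : Fin n) (c : m) :
    ∑ q with f q = c, NA G p q =
      (diagonal (fun c => (cellDegree f R c)⁻¹) * quotientMatrix f R) (f p) c := by
  rw [diagonal_mul, ← card_fiber_adj hG, ← degree_eq_cellDegree hG]
  simp only [NA_apply, ← mul_sum, sum_boole, filter_filter]

lemma NA_sub_NA_of_fiber_eq (hG : ∀ p q, G.Adj p q ↔ p ≠ q ∧ R (f p) (f q)) (p q q' : Fin n)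
    (h : f q = f q') :
    NA G p q - NA G p q' =
      twinEigenvalue f R (f q) * ((if p = q then 1 else 0) - if p = q' then 1 else 0) := by
  rw [NA_apply, NA_apply, twinEigenvalue]
  by_cases hpq : p = q <;> by_cases hpq' : p = q'
  · subst hpq hpq'
    simp
  · subst hpq
    by_cases hR : R (f p) (f p) <;> simp [hpq', hR, hG, ← h, degree_eq_cellDegree hG]
  · subst hpq'
    by_cases hR : R (f p) (f p) <;> simp [hpq, hR, hG, h, degree_eq_cellDegree hG]
  · simp [hpq, hpq', hG, h]

theorem roots_charpoly_NA_of_adj_iff (hG : ∀ p q, G.Adj p q ↔ p ≠ q ∧ R (f p) (f q))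
    (hf : Function.Surjective f) :
    (NA G).charpoly.roots =
      (diagonal (fun c => (cellDegree f R c)⁻¹) * quotientMatrix f R).charpoly.roots +
        ∑ c, Multiset.replicate (#{v | f v = c} - 1) (twinEigenvalue f R c) := by
  have hr := Function.rightInverse_surjInv hf
  rw [charpoly_eq_mul_of_twin_cells hr (sum_NA_fiber hG)
      (fun p q => NA_sub_NA_of_fiber_eq hG p q _ (hr _).symm),
    roots_mul, roots_prod_nonRep hr]
  exact mul_ne_zero (charpoly_monic _).ne_zero
    (monic_prod_of_monic _ _ fun _ _ => monic_X_sub_C _).ne_zero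

end BlowUp

lemma sum_range_two_mul {M : Type*} [AddCommMonoid M] (N : ℕ) (g : ℕ → M) :
    ∑ c ∈ range (2 * N), g c = ∑ i ∈ range N, (g (2 * i) + g (2 * i + 1)) := by
  induction N with
  | zero => simp
  | succ N ih => rw [Nat.mul_succ, sum_range_succ, sum_range_succ, sum_range_succ, ih, add_assoc]

lemma exists_le_lt_succ_of_lt {g : ℕ → ℕ} {p m : ℕ} (h0 : g 0 ≤ p) (hp : p < g m) :
    ∃ c < m, g c ≤ p ∧ p < g (c + 1) := by
  induction m with
  | zero => omega
  | succ m ih =>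
    by_cases hm : g m ≤ p
    · exact ⟨m, m.lt_succ_self, hm, hp⟩
    · obtain ⟨c, hc, h⟩ := ih (by omega)
      exact ⟨c, hc.trans m.lt_succ_self, h⟩

lemma card_filter_le_val_lt {n a b : ℕ} (hb : b ≤ n) :
    #{p : Fin n | a ≤ p.val ∧ p.val < b} = b - a := by
  rw [← Nat.card_Ico, ← card_map Fin.valEmbedding]
  congr 1
  ext x
  simp only [mem_map, mem_filter, mem_univ, true_and, Fin.valEmbedding_apply, mem_Ico]
  exact ⟨fun ⟨p, hp, hpx⟩ => hpx ▸ hp, fun hx => ⟨⟨x, by omega⟩, hx, rfl⟩⟩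

section ThresholdCells

variable (k : ℕ) (s t : ℕ → ℕ)

def cellSize (c : ℕ) : ℕ := if c % 2 = 0 then s (c / 2) else t (c / 2)

def cellStart (c : ℕ) : ℕ := ∑ j ∈ range c, cellSize s t j

def cellIndex (p : ℕ) : ℕ := #{c ∈ range (2 * k) | cellStart s t (c + 1) ≤ p}

lemma cellSize_two_mul (i : ℕ) : cellSize s t (2 * i) = s i := by
  simp [cellSize]

lemma cellSize_two_mul_add_one (i : ℕ) : cellSize s t (2 * i + 1) = t i := by
  simp [cellSize, Nat.add_mod, Nat.add_div]

lemma cellStart_two_mul (i : ℕ) : cellStart s t (2 * i) = cum s t i := by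
  simp [cellStart, cum, sum_range_two_mul, cellSize_two_mul, cellSize_two_mul_add_one]

lemma cellStart_two_mul_add_one (i : ℕ) : cellStart s t (2 * i + 1) = cum s t i + s i := by
  rw [cellStart, sum_range_succ, ← cellStart, cellStart_two_mul, cellSize_two_mul]

lemma cellStart_two_mul_add_two (i : ℕ) :
    cellStart s t (2 * i + 1 + 1) = cum s t i + s i + t i := by
  rw [show 2 * i + 1 + 1 = 2 * (i + 1) by ring, cellStart_two_mul, cum, sum_range_succ, ← cum,
    add_assoc]

lemma cellStart_mono : Monotone (cellStart s t) :=
  fun _ _ h => sum_le_sum_of_subset (range_mono h)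

variable {k s t}

lemma cellIndex_eq {p c : ℕ} (hc : c < 2 * k) (h1 : cellStart s t c ≤ p)
    (h2 : p < cellStart s t (c + 1)) : cellIndex k s t p = c := by
  rw [cellIndex, ← card_range c]
  congr 1
  ext j
  have := @cellStart_mono s t (j + 1) c
  have := @cellStart_mono s t (c + 1) (j + 1)
  simp only [mem_filter, mem_range]
  omega

lemma exists_cellIndex_eq {p : ℕ} (hp : p < cum s t k) :
    ∃ c < 2 * k, cellStart s t c ≤ p ∧ p < cellStart s t (c + 1) ∧ cellIndex k s t p = c := by
  rw [← cellStart_two_mul] at hp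
  obtain ⟨c, hc, h1, h2⟩ := exists_le_lt_succ_of_lt (by simp [cellStart]) hp
  exact ⟨c, hc, h1, h2, cellIndex_eq hc h1 h2⟩

lemma cellIndex_eq_iff {p c : ℕ} (hp : p < cum s t k) (hc : c < 2 * k) :
    cellIndex k s t p = c ↔ cellStart s t c ≤ p ∧ p < cellStart s t (c + 1) := by
  obtain ⟨c', -, h1, h2, rfl⟩ := exists_cellIndex_eq hp
  exact ⟨fun h => h ▸ ⟨h1, h2⟩, fun h => cellIndex_eq hc h.1 h.2⟩

lemma cellIndex_mono : Monotone (cellIndex k s t) :=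
  fun _ _ h => card_le_card (monotone_filter_right _ fun _ _ hc => hc.trans h)

lemma isOne_iff {p : ℕ} (hp : p < cum s t k) :
    isOne k s t p = true ↔ cellIndex k s t p % 2 = 1 := by
  have hodd : ∀ i < k, cellIndex k s t p = 2 * i + 1 ↔
      cum s t i + s i ≤ p ∧ p < cum s t i + s i + t i := fun i hi => by
    rw [cellIndex_eq_iff hp (by omega), cellStart_two_mul_add_one, cellStart_two_mul_add_two]
  obtain ⟨c, hc, -, -, hpc⟩ := exists_cellIndex_eq hp
  rw [isOne, decide_eq_true_iff]
  constructor
  · rintro ⟨i, hi, hpi⟩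
    rw [(hodd i hi).2 hpi]
    omega
  · intro h
    exact ⟨c / 2, by omega, (hodd _ (by omega)).1 (by omega)⟩

lemma cellIndex_lt {p : ℕ} (hp : p < cum s t k) : cellIndex k s t p < 2 * k := by
  obtain ⟨c, hc, -, -, rfl⟩ := exists_cellIndex_eq hp
  exact hc

lemma cellSize_pos (hs : ∀ i < k, 1 ≤ s i) (ht : ∀ i < k, 1 ≤ t i) {c : ℕ} (hc : c < 2 * k) :
    0 < cellSize s t c := by
  unfold cellSize
  split_ifs
  · exact hs _ (by omega)
  · exact ht _ (by omega)

end ThresholdCells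

section ThresholdGraph

variable (k : ℕ) (s t : ℕ → ℕ)

def thresholdCell (p : Fin (cum s t k)) : Fin (2 * k) := ⟨cellIndex k s t p, cellIndex_lt p.2⟩

/-- Odd cells are the blocks of `1`s; distinct vertices are adjacent iff the later of their
cells is odd. -/
def cellAdj (i j : Fin (2 * k)) : Prop := (max i j).val % 2 = 1

instance : DecidableRel (cellAdj k) :=
  fun i j => inferInstanceAs (Decidable ((max i j).val % 2 = 1))

variable {k s t}

lemma TG_adj_iff (p q : Fin (cum s t k)) :
    (TG k s t).Adj p q ↔ p ≠ q ∧ cellAdj k (thresholdCell k s t p) (thresholdCell k s t q) := by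
  show p ≠ q ∧ isOne k s t (max p q).val = true ↔ _
  rw [isOne_iff (max p q).2, cellAdj, Fin.coe_max, Fin.coe_max, cellIndex_mono.map_max]
  rfl

lemma card_thresholdCell_fiber (c : Fin (2 * k)) :
    #{p | thresholdCell k s t p = c} = cellSize s t c := by
  have hfiber : ({p | thresholdCell k s t p = c} : Finset _) =
      ({p | cellStart s t c ≤ p.val ∧ p.val < cellStart s t (c + 1)} : Finset (Fin _)) := by
    ext p
    simp [thresholdCell, Fin.ext_iff, cellIndex_eq_iff p.2 c.2]
  have hle : cellStart s t (c + 1) ≤ cum s t k := cellStart_two_mul s t k ▸ cellStart_mono s t c.2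
  rw [hfiber, card_filter_le_val_lt hle, cellStart, sum_range_succ, ← cellStart]
  omega

lemma thresholdCell_surjective (hs : ∀ i < k, 1 ≤ s i) (ht : ∀ i < k, 1 ≤ t i) :
    Function.Surjective (thresholdCell k s t) := fun c => by
  have hpos : 0 < #{p | thresholdCell k s t p = c} :=
    card_thresholdCell_fiber c ▸ cellSize_pos hs ht c.2
  obtain ⟨p, hp⟩ := card_pos.1 hpos
  exact ⟨p, (mem_filter.1 hp).2⟩

end ThresholdGraph

section ThresholdQuotient

variable {k : ℕ} {s t : ℕ → ℕ}

lemma Bq_eq_quotientMatrix : Bq k s t = quotientMatrix (thresholdCell k s t) (cellAdj k) := by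
  ext ⟨i, hi⟩ ⟨j, hj⟩
  simp only [quotientMatrix, of_apply, card_thresholdCell_fiber, cellAdj, Fin.coe_max, Bq, cellSize,
    Fin.mk_lt_mk, Fin.mk.injEq]
  split_ifs <;> subst_vars <;> first | (exfalso; omega) | simp

lemma Bcal_eq_diagonal_mul_quotientMatrix :
    Bcal k s t = diagonal (fun c => (cellDegree (thresholdCell k s t) (cellAdj k) c)⁻¹) *
      quotientMatrix (thresholdCell k s t) (cellAdj k) := by
  simp only [Bcal, dq, cellDegree, Bq_eq_quotientMatrix]

lemma cellDegree_of_odd {c : Fin (2 * k)} (hc : c.val % 2 = 1) :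
    cellDegree (thresholdCell k s t) (cellAdj k) c =
      ∑ i ∈ range k, (t i : ℝ) + ∑ j ∈ range (c / 2 + 1), (s j : ℝ) - 1 := by
  set g : ℕ → ℝ := fun j =>
    if max c.val j % 2 = 1 then (cellSize s t j : ℝ) - (if c.val = j then 1 else 0) else 0
  have hpair : ∀ i, g (2 * i) + g (2 * i + 1) =
      (if i ∈ range (c / 2 + 1) then (s i : ℝ) else 0) + (t i - if c / 2 = i then 1 else 0) := by
    intro i
    simp only [g, cellSize_two_mul, cellSize_two_mul_add_one, mem_range]
    split_ifs <;> first | (exfalso; omega) | ring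
  have hrange : range k ∩ range (c / 2 + 1) = range (c / 2 + 1) :=
    inter_eq_right.2 (range_subset_range.2 (by omega))
  calc cellDegree (thresholdCell k s t) (cellAdj k) c = ∑ j : Fin (2 * k), g j := by
        simp only [cellDegree, quotientMatrix, of_apply, card_thresholdCell_fiber]
        simp only [cellAdj, Fin.coe_max, g, Fin.ext_iff]
    _ = _ := by
      rw [Fin.sum_univ_eq_sum_range g, sum_range_two_mul, sum_congr rfl fun i _ => hpair i,
        sum_add_distrib, sum_sub_distrib, sum_ite_mem, hrange, sum_ite_eq,
        if_pos (mem_range.2 (by omega))]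
      ring

lemma twinEigenvalue_thresholdCell (ht : ∀ i < k, 1 ≤ t i) (c : Fin (2 * k)) :
    twinEigenvalue (thresholdCell k s t) (cellAdj k) c =
      if c.val % 2 = 1 then
        -1 / ((∑ i ∈ range k, t i + ∑ j ∈ range (c / 2 + 1), s j - 1 : ℕ) : ℝ)
      else 0 := by
  have hself : cellAdj k c c ↔ c.val % 2 = 1 := by simp [cellAdj]
  simp only [twinEigenvalue, hself]
  split_ifs with hc
  · have hpos : 1 ≤ ∑ i ∈ range k, t i :=
      (ht (c / 2) (by omega)).trans (single_le_sum (fun _ _ => Nat.zero_le _)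
        (mem_range.2 (by omega)))
    rw [cellDegree_of_odd hc, Nat.cast_sub (by omega)]
    push_cast
    ring
  · rfl

lemma sum_replicate_twinEigenvalue_thresholdCell (hs : ∀ i < k, 1 ≤ s i) (ht : ∀ i < k, 1 ≤ t i) :
    ∑ c, Multiset.replicate (#{p | thresholdCell k s t p = c} - 1)
        (twinEigenvalue (thresholdCell k s t) (cellAdj k) c) =
      Multiset.replicate ((∑ i ∈ range k, s i) - k) (0 : ℝ) +
        ∑ i ∈ range k, Multiset.replicate (t i - 1)
          (-1 / ((∑ i ∈ range k, t i + ∑ j ∈ range (i + 1), s j - 1 : ℕ) : ℝ)) := by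
  simp only [card_thresholdCell_fiber, twinEigenvalue_thresholdCell ht]
  rw [Fin.sum_univ_eq_sum_range (fun c => Multiset.replicate (cellSize s t c - 1)
      (if c % 2 = 1 then -1 / ((∑ i ∈ range k, t i + ∑ j ∈ range (c / 2 + 1), s j - 1 : ℕ) : ℝ)
        else 0)), sum_range_two_mul]
  have hodd : ∀ i, (2 * i + 1) % 2 = 1 ∧ (2 * i + 1) / 2 = i := fun i => by omega
  simp only [cellSize_two_mul, cellSize_two_mul_add_one, Nat.mul_mod_right, hodd, zero_ne_one,
    if_false, if_true, sum_add_distrib]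
  congr 1
  have hsum : ∑ i ∈ range k, (s i - 1) = ∑ i ∈ range k, s i - k := by
    rw [sum_tsub_distrib _ fun i hi => hs i (mem_range.1 hi), sum_const, card_range, smul_eq_mul,
      mul_one]
  rw [← hsum]
  exact (map_sum (Multiset.replicateAddMonoidHom (0 : ℝ)) _ _).symm

end ThresholdQuotient

theorem threshold_spectrum_decomposition_general (k : ℕ) (s t : ℕ → ℕ)
    (hs : ∀ i < k, 1 ≤ s i) (ht : ∀ i < k, 1 ≤ t i) :
    let tt := ∑ i ∈ Finset.range k, t i
    (NA (TG k s t)).charpoly.roots =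
      (Bcal k s t).charpoly.roots +
      (Multiset.replicate ((∑ i ∈ Finset.range k, s i) - k) (0 : ℝ) +
        ∑ i ∈ Finset.range k,
          Multiset.replicate (t i - 1)
            (-1 / ((tt + (∑ j ∈ Finset.range (i + 1), s j) - 1 : ℕ) : ℝ))) := by
  rw [roots_charpoly_NA_of_adj_iff TG_adj_iff (thresholdCell_surjective hs ht),
    Bcal_eq_diagonal_mul_quotientMatrix, sum_replicate_twinEigenvalue_thresholdCell hs ht]

/-- For a connected threshold graph `0^{s₁}1^{t₁}⋯0^{s_k}1^{t_k}`,
the spectrum (with multiplicity) of the normalized adjacency matrix `𝒜` is the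
union of the spectrum of the normalized quotient matrix `ℬ_π` and the multiset
`T` consisting of `0` with multiplicity `s - k` and `-1/(t + Sᵢ - 1)` with
multiplicity `tᵢ - 1` for each `i`. -/
theorem threshold_spectrum_decomposition (k : ℕ) (s t : ℕ → ℕ) (hk : 1 ≤ k)
    (hs : ∀ i < k, 1 ≤ s i) (ht : ∀ i < k, 1 ≤ t i) :
    let tt := ∑ i ∈ Finset.range k, t i
    (NA (TG k s t)).charpoly.roots =
      (Bcal k s t).charpoly.roots +
      (Multiset.replicate ((∑ i ∈ Finset.range k, s i) - k) (0 : ℝ) +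
        ∑ i ∈ Finset.range k,
          Multiset.replicate (t i - 1)
            (-1 / ((tt + (∑ j ∈ Finset.range (i + 1), s j) - 1 : ℕ) : ℝ))) :=
  threshold_spectrum_decomposition_general k s t hs ht
end

section
/- Let Γ be a connected threshold graph with string 0^{s}1^{t}, s,t ≥ 2, and n = s + t. Then the eigenvalues of the normalized adjacency matrix are exactly 1, 0 with multiplicity s−1, −1/(n−1) with multiplicity t−1, and −(n−t)/(n−1). -/
/-!
List the `s` independent vertices before the `t` dominating ones. Then `D⁻¹A` has constant
blocks `0`, `t⁻¹J`, `cJ` and `c(J - I)`, where `c = 1/(n-1)`. Taking the Schur complement of the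
scalar block `x • 1` in `x • 1 - D⁻¹A` leaves `(x + c) • 1` minus a constant matrix, whose
determinant is given by the matrix determinant lemma. Hence
`det (x • 1 - D⁻¹A) = x^(s-1) (x + c)^(t-1) (x - 1) (x + s c)` for all `x ∉ {0, -c}`, which
determines the characteristic polynomial; note `(n - t)/(n - 1) = s c`.
-/

open Matrix Polynomial BigOperators Finset

namespace Matrix

variable {m n K : Type*} [Fintype m] [Fintype n] [DecidableEq m] [DecidableEq n] [Field K]

theorem det_smul_one_sub_of_const {a : K} (ha : a ≠ 0) (e : K) :
    det (a • 1 - of fun _ _ : n => e) = a ^ Fintype.card n * (1 - Fintype.card n * e / a) := by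
  have hrankOne : a • 1 - of (fun _ _ : n => e) =
      a • ((1 : Matrix n n K) + replicateCol Unit (fun _ : n => -e / a) *
        replicateRow Unit (fun _ : n => (1 : K))) := by
    ext i j
    simp only [sub_apply, smul_apply, add_apply, one_apply, of_apply, mul_apply,
      replicateCol_apply, replicateRow_apply, Finset.univ_unique, Finset.sum_singleton, smul_eq_mul]
    split_ifs <;> field_simp <;> ring
  rw [hrankOne, det_smul, det_one_add_replicateCol_mul_replicateRow]
  simp only [dotProduct, Finset.sum_const, Finset.card_univ, nsmul_eq_mul]
  ring

theorem det_fromBlocks_smul_one_of_const {a : K} (ha : a ≠ 0) (b c : K) (D : Matrix n n K) :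
    det (fromBlocks (a • 1 : Matrix m m K) (of fun _ _ => b) (of fun _ _ => c) D) =
      a ^ Fintype.card m * det (D - of fun _ _ => Fintype.card m * c * b / a) := by
  let : Invertible (a • 1 : Matrix m m K) :=
    ⟨a⁻¹ • 1, by simp [smul_smul, ha], by simp [smul_smul, ha]⟩
  rw [det_fromBlocks₁₁, det_smul, det_one, mul_one, show ⅟(a • 1 : Matrix m m K) = a⁻¹ • 1 from rfl]
  congr
  ext i j
  simp only [Matrix.mul_smul, Matrix.mul_one, smul_of, mul_apply, of_apply, Pi.smul_apply,
    smul_eq_mul, sum_const, card_univ, nsmul_eq_mul]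
  ring

theorem det_scalar_sub_fromBlocks_of_const {p q x : K} (hx : x ≠ 0) (hxq : x + q ≠ 0) :
    det (scalar (m ⊕ n) x - fromBlocks 0 (of fun _ _ => p) (of fun _ _ => q)
      (of fun i j => if i = j then 0 else q)) =
      x ^ Fintype.card m * (x + q) ^ Fintype.card n *
        (1 - Fintype.card n * (q + Fintype.card m * q * p / x) / (x + q)) := by
  have hblocks : scalar (m ⊕ n) x - fromBlocks 0 (of fun _ _ => p) (of fun _ _ => q)
      (of fun i j => if i = j then 0 else q) =
      fromBlocks (x • 1) (of fun _ _ => -p) (of fun _ _ => -q) ((x + q) • 1 - of fun _ _ => q) := by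
    ext (i | i) (j | j)
    · by_cases h : i = j <;> simp [h]
    · simp
    · simp
    · by_cases h : i = j <;> simp [h]
  have hschur : (x + q) • 1 - of (fun _ _ : n => q) - of (fun _ _ => Fintype.card m * -q * -p / x) =
      (x + q) • 1 - of fun _ _ => q + Fintype.card m * q * p / x := by
    ext i j
    simp only [sub_apply, of_apply]
    ring
  rw [hblocks, det_fromBlocks_smul_one_of_const hx, hschur, det_smul_one_sub_of_const hxq]
  ring

end Matrix

abbrev completeSplitGraph (s t : ℕ) : SimpleGraph (Fin (s + t)) :=
  thresholdGraph (s + t) fun p => decide (s ≤ p.val)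

section CompleteSplitGraph

variable {s t : ℕ}

theorem completeSplitGraph_adj_iff {i j : Fin (s + t)} :
    (completeSplitGraph s t).Adj i j ↔ i ≠ j ∧ (s ≤ i ∨ s ≤ j) := by
  simp [thresholdGraph, Fin.coe_max]

theorem completeSplitGraph_not_adj_castAdd_castAdd (i j : Fin s) :
    ¬(completeSplitGraph s t).Adj (Fin.castAdd t i) (Fin.castAdd t j) := by
  simp [completeSplitGraph_adj_iff]

theorem completeSplitGraph_adj_castAdd_natAdd (i : Fin s) (j : Fin t) :
    (completeSplitGraph s t).Adj (Fin.castAdd t i) (Fin.natAdd s j) := by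
  simp only [completeSplitGraph_adj_iff, ne_eq, Fin.ext_iff, Fin.val_castAdd, Fin.val_natAdd,
    le_add_iff_nonneg_right, zero_le, or_true, and_true]
  omega

theorem completeSplitGraph_adj_natAdd_castAdd (i : Fin t) (j : Fin s) :
    (completeSplitGraph s t).Adj (Fin.natAdd s i) (Fin.castAdd t j) :=
  (completeSplitGraph_adj_castAdd_natAdd j i).symm

theorem completeSplitGraph_adj_natAdd_natAdd {i j : Fin t} :
    (completeSplitGraph s t).Adj (Fin.natAdd s i) (Fin.natAdd s j) ↔ i ≠ j := by
  simp [completeSplitGraph_adj_iff]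

theorem completeSplitGraph_degree_castAdd (i : Fin s) :
    (completeSplitGraph s t).degree (Fin.castAdd t i) = t := by
  rw [← SimpleGraph.card_neighborFinset_eq_degree, SimpleGraph.neighborFinset_eq_filter,
    Finset.card_filter, Fin.sum_univ_add]
  simp [completeSplitGraph_not_adj_castAdd_castAdd, completeSplitGraph_adj_castAdd_natAdd]

theorem completeSplitGraph_degree_natAdd (j : Fin t) :
    (completeSplitGraph s t).degree (Fin.natAdd s j) = s + t - 1 := by
  rw [← SimpleGraph.card_neighborFinset_eq_degree, SimpleGraph.neighborFinset_eq_filter,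
    Finset.card_filter, Fin.sum_univ_add]
  simp only [completeSplitGraph_adj_natAdd_castAdd, ↓reduceIte, sum_const, card_univ,
    Fintype.card_fin, smul_eq_mul, mul_one, completeSplitGraph_adj_natAdd_natAdd, ne_eq, ite_not,
    sum_ite, filter_ne, mem_univ, card_erase_of_mem, mul_zero, zero_add]
  exact (Nat.add_sub_assoc j.pos s).symm

theorem NA_completeSplitGraph_submatrix :
    (NA (completeSplitGraph s t)).submatrix finSumFinEquiv finSumFinEquiv =
      fromBlocks 0 (of fun _ _ => (t : ℝ)⁻¹) (of fun _ _ => ((s + t - 1 : ℕ) : ℝ)⁻¹)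
        (of fun i j => if i = j then 0 else ((s + t - 1 : ℕ) : ℝ)⁻¹) := by
  ext (i | i) (j | j) <;>
    simp only [NA, submatrix_apply, diagonal_mul, SimpleGraph.adjMatrix_apply,
      finSumFinEquiv_apply_left, finSumFinEquiv_apply_right] <;>
    simp [completeSplitGraph_degree_castAdd, completeSplitGraph_degree_natAdd,
      completeSplitGraph_not_adj_castAdd_castAdd, completeSplitGraph_adj_castAdd_natAdd,
      completeSplitGraph_adj_natAdd_castAdd, completeSplitGraph_adj_natAdd_natAdd]

noncomputable def completeSplitSpectrum (s t : ℕ) : Multiset ℝ :=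
  {1} + Multiset.replicate (s - 1) 0 + Multiset.replicate (t - 1) (-(s + t - 1 : ℝ)⁻¹) +
    {-(s / (s + t - 1 : ℝ))}

theorem charpoly_NA_completeSplitGraph (hs : 0 < s) (ht : 0 < t) :
    (NA (completeSplitGraph s t)).charpoly =
      ((completeSplitSpectrum s t).map fun a => X - C a).prod := by
  set c : ℝ := (s + t - 1 : ℝ)⁻¹ with hc
  have hcast : ((s + t - 1 : ℕ) : ℝ) = s + t - 1 := by
    rw [Nat.cast_sub (by omega)]; push_cast; ring
  apply eq_of_infinite_eval_eq
  refine (Set.toFinite {0, -c}).infinite_compl.mono fun x hx => ?_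
  obtain ⟨hx0, hxc⟩ : x ≠ 0 ∧ x + c ≠ 0 := by
    simp only [Set.mem_compl_iff, Set.mem_insert_iff, Set.mem_singleton_iff, not_or] at hx
    exact ⟨hx.1, fun h => hx.2 (eq_neg_of_add_eq_zero_left h)⟩
  rw [Set.mem_ofPred_eq, ← charpoly_reindex finSumFinEquiv.symm, eval_charpoly, reindex_apply,
    Equiv.symm_symm, NA_completeSplitGraph_submatrix, hcast, ← hc,
    det_scalar_sub_fromBlocks_of_const hx0 hxc]
  simp only [Fintype.card_fin, completeSplitSpectrum, Multiset.singleton_add, Multiset.cons_add,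
    Multiset.map_cons, map_one, Multiset.map_add, Multiset.map_replicate, map_zero, sub_zero,
    map_neg, sub_neg_eq_add, Multiset.map_singleton, Multiset.prod_cons, Multiset.prod_add,
    Multiset.prod_replicate, Multiset.prod_singleton, eval_mul, eval_sub, eval_X, eval_one,
    eval_pow, eval_add, eval_C]
  have hn : (s + t - 1 : ℝ) ≠ 0 := by
    have : (1 : ℝ) ≤ s := by exact_mod_cast hs
    have : (1 : ℝ) ≤ t := by exact_mod_cast ht
    linarith
  have hrel : c * (s + t - 1) = 1 := inv_mul_cancel₀ hn
  have ht0 : (t : ℝ) ≠ 0 := by positivity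
  rw [← pow_sub_one_mul hs.ne' x, ← pow_sub_one_mul ht.ne' (x + c), ← hc]
  field_simp
  linear_combination (x - x * t - s) * hrel

end CompleteSplitGraph

/-- For the connected threshold graph with string `0^s 1^t`
(`s, t ≥ 2`), i.e. the complete split graph on `n = s + t` vertices, the
eigenvalues of the normalized adjacency matrix are exactly `1`, `0` with
multiplicity `s-1`, `-1/(n-1)` with multiplicity `t-1`, and `-(n-t)/(n-1)`. -/
theorem complete_split_spectrum (s t : ℕ) (hs : 2 ≤ s) (ht : 2 ≤ t) :
    let n := s + t
    let G := thresholdGraph n (fun p => decide (s ≤ p.val))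
    (NA G).charpoly.roots =
      {(1 : ℝ)} + Multiset.replicate (s - 1) (0 : ℝ) +
        Multiset.replicate (t - 1) (-1 / ((n : ℝ) - 1)) +
        {-(((n : ℝ) - t) / ((n : ℝ) - 1))} := by
  intro n G
  rw [charpoly_NA_completeSplitGraph (by omega) (by omega), roots_multiset_prod_X_sub_C,
    completeSplitSpectrum]
  simp only [n, Nat.cast_add, neg_div, one_div, add_sub_cancel_right]
end
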